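/- Let μ, c, ν ∈ ℝ with μ ≤ c < ν, and let b > 0. Then b · tan((1/2) · arctan(2b/(ν − c))) < c − μ if and only if b² < (c − μ)² + (c − μ)(ν − c), i.e., if and only if b < √((c − μ)² + (c − μ)(ν − c)). -/

import Mathlib

/-!
With `t = tan (θ / 2)` and `θ = arctan x`, the double-angle formula gives `x = 2t / (1 - t²)` with
`|t| < 1`, hence `x t = √(1 + x²) - 1`. For `x = 2b / d` this says that `b · tan (θ / 2)` is the
positive root `(√(d² + 4b²) - d) / 2` of `s² + d s - b²`, and comparing that root with `m = c - μ`
amounts to comparing `√(d² + 4b²)` with `d + 2m`, i.e. `b²` with `m² + m d`.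
-/

open Real

lemma abs_tan_half_arctan_lt_one (x : ℝ) : |tan (arctan x / 2)| < 1 := by
  have hlo := neg_pi_div_two_lt_arctan x
  have hhi := arctan_lt_pi_div_two x
  rw [abs_lt]
  constructor
  · have := tan_lt_tan_of_lt_of_lt_pi_div_two (x := -(π / 4)) (y := arctan x / 2)
      (by linarith [pi_pos]) (by linarith) (by linarith)
    rwa [tan_neg, tan_pi_div_four] at this
  · have := tan_lt_tan_of_lt_of_lt_pi_div_two (x := arctan x / 2) (y := π / 4)
      (by linarith) (by linarith [pi_pos]) (by linarith)
    rwa [tan_pi_div_four] at this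

lemma mul_tan_half_arctan (x : ℝ) : x * tan (arctan x / 2) = √(1 + x ^ 2) - 1 := by
  set t := tan (arctan x / 2)
  have ht : 0 < 1 - t ^ 2 := by
    have := abs_tan_half_arctan_lt_one x
    nlinarith [sq_abs t, abs_nonneg t]
  have hx : x = 2 * t / (1 - t ^ 2) := by
    rw [← tan_two_mul, mul_div_cancel₀ _ two_ne_zero, tan_arctan]
  have hsqrt : √(1 + x ^ 2) = (1 + t ^ 2) / (1 - t ^ 2) := by
    rw [sqrt_eq_iff_eq_sq (by positivity) (by positivity), hx]
    field_simp
    ring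
  rw [hsqrt, hx]
  field_simp
  ring

lemma mul_tan_half_arctan_div {b d : ℝ} (hd : 0 < d) :
    b * tan (1 / 2 * arctan (2 * b / d)) = (√(d ^ 2 + 4 * b ^ 2) - d) / 2 := by
  have hsqrt : √(d ^ 2 + 4 * b ^ 2) = d * √(1 + (2 * b / d) ^ 2) := by
    rw [← sqrt_sq hd.le, ← sqrt_mul (sq_nonneg d), sqrt_sq hd.le]
    congr 1
    field_simp
    ring
  have key := mul_tan_half_arctan (2 * b / d)
  rw [hsqrt, ← mul_sub_one, ← key, one_div_mul_eq_div]
  field_simp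

lemma half_sqrt_sub_lt_iff {b d m : ℝ} (hd : 0 < d) (hm : 0 ≤ m) :
    (√(d ^ 2 + 4 * b ^ 2) - d) / 2 < m ↔ b ^ 2 < m ^ 2 + m * d := by
  rw [div_lt_iff₀ two_pos, sub_lt_iff_lt_add, sqrt_lt' (by linarith)]
  constructor <;> intro h <;> nlinarith

/-- For `μ ≤ c < ν` and `b > 0`: `b · tan(½ arctan(2b/(ν-c))) < c - μ` iff
`b² < (c-μ)² + (c-μ)(ν-c)`, i.e. iff `b < √((c-μ)² + (c-μ)(ν-c))`. -/
theorem stmt_12 (μ c ν b : ℝ) (h1 : μ ≤ c) (h2 : c < ν) (hb : 0 < b) :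
    (b * Real.tan ((1 / 2) * Real.arctan (2 * b / (ν - c))) < c - μ ↔
      b ^ 2 < (c - μ) ^ 2 + (c - μ) * (ν - c)) ∧
    (b * Real.tan ((1 / 2) * Real.arctan (2 * b / (ν - c))) < c - μ ↔
      b < Real.sqrt ((c - μ) ^ 2 + (c - μ) * (ν - c))) := by
  have hd : 0 < ν - c := sub_pos.mpr h2
  have hsq : b * tan (1 / 2 * arctan (2 * b / (ν - c))) < c - μ ↔
      b ^ 2 < (c - μ) ^ 2 + (c - μ) * (ν - c) := by
    rw [mul_tan_half_arctan_div hd]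
    exact half_sqrt_sub_lt_iff hd (sub_nonneg.mpr h1)
  exact ⟨hsq, hsq.trans (lt_sqrt hb.le).symm⟩
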